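/- arXiv:2406.19912 — 6 statements merged into one kernel-verified Lean document; each statement's English description precedes it below -/
import Mathlib

section
/- Let K be a field with an absolute value |·| and let t ∈ (0,1]. If A is a K-algebra and ‖·‖ is a multiplicative seminorm on A whose restriction to K equals |·|^t, then ‖·‖^{1/t} is also a multiplicative seminorm on A (in particular it satisfies the triangle inequality) whose restriction to K equals |·|. -/
/-!
Put `a = ‖x‖^(1/t)` and `b = ‖y‖^(1/t)`. Expanding `(x + y)^n` binomially, and using
`‖C(n,i)‖ = |C(n,i)|^t ≤ C(n,i)^t`, each of the `n + 1` terms has seminorm at most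
`(C(n,i) a^i b^(n-i))^t ≤ ((a + b)^n)^t`. Hence `‖x + y‖^n ≤ (n + 1) ((a + b)^t)^n`, and since
`n + 1` grows subexponentially, `‖x + y‖ ≤ (a + b)^t`.
-/

open Finset Filter Real

/-- A multiplicative seminorm on a commutative ring: `f 0 = 0`, `f 1 = 1`,
multiplicativity, triangle inequality, and nonnegativity. -/
def IsMultSeminorm {A : Type*} [CommRing A] (f : A → ℝ) : Prop :=
  f 0 = 0 ∧ f 1 = 1 ∧ (∀ x y, f (x * y) = f x * f y) ∧
    (∀ x y, f (x + y) ≤ f x + f y) ∧ ∀ x, 0 ≤ f x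

theorem le_of_forall_pow_le_succ_pow_mul_pow {S T : ℝ} (hT : 0 ≤ T) (m : ℕ)
    (h : ∀ n : ℕ, S ^ n ≤ ((n : ℝ) + 1) ^ m * T ^ n) : S ≤ T := by
  by_contra! hTS
  have hS : 0 < S := hT.trans_lt hTS
  have hr : T / S < 1 := (div_lt_one hS).2 hTS
  have hsmall : ∀ᶠ n : ℕ in atTop, 2 ^ m * ((n : ℝ) ^ m * (T / S) ^ n) < 1 := by
    have hlim := (tendsto_pow_const_mul_const_pow_of_lt_one m (by positivity) hr).const_mul (2 ^ m)
    rw [mul_zero] at hlim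
    exact hlim.eventually (gt_mem_nhds one_pos)
  obtain ⟨n, hn1, hn⟩ := ((eventually_ge_atTop 1).and hsmall).exists
  have hSn : S ^ n ≤ 2 ^ m * ((n : ℝ) ^ m * (T / S) ^ n) * S ^ n :=
    calc S ^ n ≤ ((n : ℝ) + 1) ^ m * T ^ n := h n
      _ ≤ (2 * n) ^ m * T ^ n := by
        gcongr
        linarith [show (1 : ℝ) ≤ n by exact_mod_cast hn1]
      _ = 2 ^ m * ((n : ℝ) ^ m * (T / S) ^ n) * S ^ n := by
        rw [div_pow]; field_simp; ring
  linarith [(mul_lt_iff_lt_one_left (pow_pos hS n)).2 hn]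

theorem choose_mul_pow_mul_pow_le_add_pow {a b : ℝ} (ha : 0 ≤ a) (hb : 0 ≤ b) {n i : ℕ}
    (hi : i ≤ n) : a ^ i * b ^ (n - i) * n.choose i ≤ (a + b) ^ n := by
  rw [add_pow]
  exact single_le_sum (f := fun j => a ^ j * b ^ (n - j) * n.choose j)
    (fun j _ => by positivity) (mem_range.2 (Nat.lt_succ_of_le hi))

namespace IsMultSeminorm

variable {A : Type*} [CommRing A] {f : A → ℝ}

theorem map_pow (hf : IsMultSeminorm f) (x : A) (n : ℕ) : f (x ^ n) = f x ^ n := by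
  induction n with
  | zero => simpa using hf.2.1
  | succ n ih => rw [pow_succ, pow_succ, hf.2.2.1, ih]

theorem map_sum_le (hf : IsMultSeminorm f) {ι : Type*} (s : Finset ι) (g : ι → A) :
    f (∑ i ∈ s, g i) ≤ ∑ i ∈ s, f (g i) :=
  le_sum_of_subadditive f hf.1.le hf.2.2.2.1 s g

theorem pow_map_add_le (hf : IsMultSeminorm f) {p : ℝ} (hp : 0 < p)
    (hnat : ∀ n : ℕ, f n ≤ (n : ℝ) ^ p) (x y : A) (n : ℕ) :
    f (x + y) ^ n ≤ (n + 1) * ((f x ^ (1 / p) + f y ^ (1 / p)) ^ p) ^ n := by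
  have ⟨_, _, hmul, _, hnn⟩ := hf
  set a := f x ^ (1 / p)
  set b := f y ^ (1 / p)
  have ha : 0 ≤ a := rpow_nonneg (hnn x) _
  have hb : 0 ≤ b := rpow_nonneg (hnn y) _
  have hxa : f x = a ^ p := by rw [← rpow_mul (hnn x), one_div_mul_cancel hp.ne', rpow_one]
  have hyb : f y = b ^ p := by rw [← rpow_mul (hnn y), one_div_mul_cancel hp.ne', rpow_one]
  have hterm : ∀ i ∈ range (n + 1),
      f (x ^ i * y ^ (n - i) * n.choose i) ≤ ((a + b) ^ p) ^ n := by
    intro i hi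
    calc f (x ^ i * y ^ (n - i) * n.choose i)
        = f x ^ i * f y ^ (n - i) * f (n.choose i) := by
          rw [hmul, hmul, hf.map_pow, hf.map_pow]
      _ ≤ (a ^ p) ^ i * (b ^ p) ^ (n - i) * (n.choose i : ℝ) ^ p := by
        rw [← hxa, ← hyb]
        gcongr
        exacts [mul_nonneg (pow_nonneg (hnn x) _) (pow_nonneg (hnn y) _), hnat _]
      _ = (a ^ i * b ^ (n - i) * n.choose i) ^ p := by
        rw [mul_rpow (by positivity) (by positivity), mul_rpow (by positivity) (by positivity),
          rpow_pow_comm ha, rpow_pow_comm hb]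
      _ ≤ ((a + b) ^ n) ^ p := by
        gcongr
        exact choose_mul_pow_mul_pow_le_add_pow ha hb (Nat.lt_succ_iff.1 (mem_range.1 hi))
      _ = ((a + b) ^ p) ^ n := (rpow_pow_comm (by positivity) p n).symm
  calc f (x + y) ^ n = f (∑ i ∈ range (n + 1), x ^ i * y ^ (n - i) * n.choose i) := by
        rw [← hf.map_pow, add_pow]
    _ ≤ ∑ i ∈ range (n + 1), f (x ^ i * y ^ (n - i) * n.choose i) := hf.map_sum_le _ _
    _ ≤ ∑ i ∈ range (n + 1), ((a + b) ^ p) ^ n := sum_le_sum hterm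
    _ = (n + 1) * ((a + b) ^ p) ^ n := by simp

theorem rpow_one_div (hf : IsMultSeminorm f) {p : ℝ} (hp : 0 < p)
    (hnat : ∀ n : ℕ, f n ≤ (n : ℝ) ^ p) : IsMultSeminorm (fun x => f x ^ (1 / p)) := by
  have ⟨h0, h1, hmul, _, hnn⟩ := hf
  refine ⟨by simp [h0, hp.ne'], by simp [h1],
    fun x y => by simp only [hmul, mul_rpow (hnn x) (hnn y)], fun x y => ?_,
    fun x => rpow_nonneg (hnn x) _⟩
  have hsum : 0 ≤ f x ^ (1 / p) + f y ^ (1 / p) :=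
    add_nonneg (rpow_nonneg (hnn x) _) (rpow_nonneg (hnn y) _)
  have hle : f (x + y) ≤ (f x ^ (1 / p) + f y ^ (1 / p)) ^ p :=
    le_of_forall_pow_le_succ_pow_mul_pow (rpow_nonneg hsum _) 1
      (by simpa using hf.pow_map_add_le hp hnat x y)
  calc f (x + y) ^ (1 / p) ≤ ((f x ^ (1 / p) + f y ^ (1 / p)) ^ p) ^ (1 / p) := by
        gcongr
        exact hnn _
    _ = f x ^ (1 / p) + f y ^ (1 / p) := by
        rw [← rpow_mul hsum, mul_one_div_cancel hp.ne', rpow_one]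

end IsMultSeminorm

theorem stmt_0_general {K A : Type*} [Field K] [CommRing A] [Algebra K A]
    (v : AbsoluteValue K ℝ) (t : ℝ) (ht0 : 0 < t)
    (f : A → ℝ) (hf : IsMultSeminorm f)
    (hres : ∀ c : K, f (algebraMap K A c) = v c ^ t) :
    IsMultSeminorm (fun a => f a ^ (1 / t)) ∧
      ∀ c : K, f (algebraMap K A c) ^ (1 / t) = v c := by
  have hnat (n : ℕ) : f n ≤ (n : ℝ) ^ t := by
    rw [← map_natCast (algebraMap K A), hres]
    exact rpow_le_rpow (v.nonneg _) (v.apply_nat_le_self n) ht0.le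
  refine ⟨hf.rpow_one_div ht0 hnat, fun c => ?_⟩
  rw [hres, ← rpow_mul (v.nonneg c), mul_one_div_cancel ht0.ne', rpow_one]

/-- if `‖·‖` is a multiplicative seminorm on a `K`-algebra `A` restricting to
`|·|^t` on `K` for some `t ∈ (0,1]`, then `‖·‖^{1/t}` is a multiplicative seminorm
restricting to `|·|` on `K`. -/
theorem stmt_0 {K A : Type*} [Field K] [CommRing A] [Algebra K A]
    (v : AbsoluteValue K ℝ) (t : ℝ) (ht0 : 0 < t) (ht1 : t ≤ 1)
    (f : A → ℝ) (hf : IsMultSeminorm f)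
    (hres : ∀ c : K, f (algebraMap K A c) = v c ^ t) :
    IsMultSeminorm (fun a => f a ^ (1 / t)) ∧
      ∀ c : K, f (algebraMap K A c) ^ (1 / t) = v c :=
  stmt_0_general v t ht0 f hf hres
end

section
/- Let K be a field complete with respect to a non-trivial absolute value |·|₁, let |·|₀ be the trivial absolute value on K, and let |·|_hyb = max{|·|₁, |·|₀}. Then every multiplicative seminorm |·|_λ on K bounded by |·|_hyb (i.e. |x|_λ ≤ |x|_hyb for all x) is of the form |·|₁^t for a unique t ∈ [0,1]. Consequently the map t ↦ |·|₁^t is a bijection from [0,1] onto the set of multiplicative seminorms on K bounded by |·|_hyb. -/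
open scoped Classical
/-!
A seminorm `f` bounded by the hybrid norm is at most `1` on the unit ball of `|·|₁`. On a field it
is an absolute value, and if it is non-trivial, the unit-ball inclusion upgrades to
`|x|₁ < 1 → f x < 1`: an `x` with `|x|₁ < 1` and `f x = 1` would force `f ≤ 1` everywhere
(multiply by high powers of `x`), making `f` trivial. Hence `f` is equivalent to `|·|₁`, i.e.
`f = |·|₁ ^ t` with `t > 0`; a trivial `f` is `|·|₁ ^ 0`. Comparing with `|a|₁` for `|a|₁ > 1` gives `t ≤ 1`. Conversely `|·|₁ ^ t` satisfies the
triangle inequality for `t ≤ 1` because `(a + b) ^ t ≤ a ^ t + b ^ t`.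
-/

namespace IsMultSeminorm

variable {K : Type*} [Field K] {f : K → ℝ}

lemma apply_ne_zero (hf : IsMultSeminorm f) {x : K} (hx : x ≠ 0) : f x ≠ 0 := by
  intro h
  have : f x * f x⁻¹ = 1 := by rw [← hf.2.2.1, mul_inv_cancel₀ hx, hf.2.1]
  simp [h] at this

def toAbsoluteValue (hf : IsMultSeminorm f) : AbsoluteValue K ℝ where
  toFun := f
  map_mul' := hf.2.2.1
  nonneg' := hf.2.2.2.2
  eq_zero' _ := ⟨not_imp_not.mp hf.apply_ne_zero, fun h => h ▸ hf.1⟩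
  add_le' := hf.2.2.2.1

end IsMultSeminorm

namespace AbsoluteValue

section Field

variable {F : Type*} [Field F] {v w : AbsoluteValue F ℝ}

lemma lt_one_of_le_one_imp (hw : w.IsNontrivial) (h : ∀ x, v x ≤ 1 → w x ≤ 1) {x : F}
    (hx : v x < 1) : w x < 1 := by
  refine (h x hx.le).lt_of_ne fun hwx => ?_
  obtain ⟨y, hy⟩ := hw.exists_abv_gt_one
  have hy₀ : y ≠ 0 := w.ne_zero_iff.mp (zero_lt_one.trans hy).ne'
  obtain ⟨n, hn⟩ := exists_pow_lt_of_lt_one (inv_pos.mpr (v.pos hy₀)) hx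
  have hvyxn : v (y * x ^ n) ≤ 1 := by
    rw [map_mul, map_pow]
    exact ((lt_inv_mul_iff₀ (v.pos hy₀)).mp (by simpa using hn)).le
  have := h _ hvyxn
  rw [map_mul, map_pow, hwx, one_pow, mul_one] at this
  linarith

theorem exists_rpow_eq_of_le_one_imp (hv : v.IsNontrivial) (h : ∀ x, v x ≤ 1 → w x ≤ 1) :
    ∃ t : ℝ, 0 ≤ t ∧ ∀ x, x ≠ 0 → w x = v x ^ t := by
  by_cases hw : w.IsNontrivial
  · obtain ⟨t, ht, hvw⟩ :=
      isEquiv_iff_exists_rpow_eq.mp (isEquiv_of_lt_one_imp hv fun _ => lt_one_of_le_one_imp hw h)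
    exact ⟨t, ht.le, fun x _ => (congrFun hvw x).symm⟩
  · exact ⟨0, le_rfl, fun x hx => by simp [hx, hw]⟩

end Field

lemma IsNontrivial.eq_of_forall_rpow_eq {R : Type*} [Semiring R] {v : AbsoluteValue R ℝ}
    (hv : v.IsNontrivial) {s t : ℝ} (h : ∀ x, x ≠ 0 → v x ^ s = v x ^ t) : s = t := by
  obtain ⟨a, ha₀, ha₁⟩ := hv
  exact (Real.rpow_right_inj (v.pos ha₀) ha₁).mp (h a ha₀)

variable {R : Type*} [CommRing R] (v : AbsoluteValue R ℝ) {t : ℝ}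

lemma isMultSeminorm_rpow [Nontrivial R] (ht₀ : 0 ≤ t) (ht₁ : t ≤ 1) :
    IsMultSeminorm (fun x : R => if x = 0 then 0 else v x ^ t) := by
  refine ⟨if_pos rfl, by simp, fun x y => ?_, fun x y => ?_, fun x => ?_⟩
  · rcases eq_or_ne x 0 with rfl | hx
    · simp
    rcases eq_or_ne y 0 with rfl | hy
    · simp
    have hxy : x * y ≠ 0 := by
      rw [← v.pos_iff, map_mul]
      exact mul_pos (v.pos hx) (v.pos hy)
    simp [hx, hy, hxy, Real.mul_rpow (v.nonneg x) (v.nonneg y)]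
  · rcases eq_or_ne x 0 with rfl | hx
    · simp
    rcases eq_or_ne y 0 with rfl | hy
    · simp
    simp only [hx, hy, if_false]
    split_ifs
    · positivity
    calc v (x + y) ^ t ≤ (v x + v y) ^ t := by gcongr; exact v.add_le x y
      _ ≤ v x ^ t + v y ^ t := Real.rpow_add_le_add_rpow (v.nonneg x) (v.nonneg y) ht₀ ht₁
  · dsimp only
    split_ifs
    · exact le_rfl
    · positivity

lemma rpow_le_max_one (ht₀ : 0 ≤ t) (ht₁ : t ≤ 1) (x : R) :
    (if x = 0 then (0 : ℝ) else v x ^ t) ≤ max (v x) (if x = 0 then 0 else 1) := by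
  split_ifs with hx
  · simp
  rcases le_or_gt (v x) 1 with h | h
  · exact le_max_of_le_right (Real.rpow_le_one (v.nonneg x) h ht₀)
  · exact le_max_of_le_left (Real.rpow_le_self_of_one_le h.le ht₁)

end AbsoluteValue

theorem stmt_1_general {K : Type*} [Field K] (v : AbsoluteValue K ℝ)
    (hnontrivial : ∃ x : K, x ≠ 0 ∧ v x ≠ 1) :
    (∀ f : K → ℝ, IsMultSeminorm f →
      (∀ x : K, f x ≤ max (v x) (if x = 0 then 0 else 1)) →
      ∃! t : ℝ, t ∈ Set.Icc (0 : ℝ) 1 ∧ ∀ x : K, x ≠ 0 → f x = v x ^ t) ∧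
    (∀ t ∈ Set.Icc (0 : ℝ) 1,
      IsMultSeminorm (fun x : K => if x = 0 then 0 else v x ^ t) ∧
      ∀ x : K, (if x = 0 then (0 : ℝ) else v x ^ t) ≤
        max (v x) (if x = 0 then 0 else 1)) := by
  have hv : v.IsNontrivial := hnontrivial
  refine ⟨fun f hf hbd => ?_, fun t ht =>
    ⟨v.isMultSeminorm_rpow ht.1 ht.2, v.rpow_le_max_one ht.1 ht.2⟩⟩
  have hbd_ne {x : K} (hx : x ≠ 0) : f x ≤ max (v x) 1 := by simpa [hx] using hbd x
  have hball (x : K) (hx : v x ≤ 1) : f x ≤ 1 := by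
    rcases eq_or_ne x 0 with rfl | hx₀
    · simp [hf.1]
    · exact (hbd_ne hx₀).trans (max_le hx le_rfl)
  obtain ⟨t, ht₀, hft⟩ : ∃ t : ℝ, 0 ≤ t ∧ ∀ x, x ≠ 0 → f x = v x ^ t :=
    v.exists_rpow_eq_of_le_one_imp (w := hf.toAbsoluteValue) hv hball
  obtain ⟨a, ha⟩ := hv.exists_abv_gt_one
  have ha₀ : a ≠ 0 := v.ne_zero_iff.mp (zero_lt_one.trans ha).ne'
  have ht₁ : t ≤ 1 := by
    rw [← Real.rpow_le_rpow_left_iff ha, Real.rpow_one, ← hft a ha₀]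
    simpa [ha.le] using hbd_ne ha₀
  refine ⟨t, ⟨⟨ht₀, ht₁⟩, hft⟩, fun s ⟨_, hfs⟩ => hv.eq_of_forall_rpow_eq fun x hx => ?_⟩
  rw [← hfs x hx, hft x hx]

/-- over a field `K` complete w.r.t. a non-trivial absolute value `|·|₁`,
every multiplicative seminorm bounded by the hybrid norm `max{|·|₁,|·|₀}` is `|·|₁^t`
for a unique `t ∈ [0,1]`; conversely each `t ∈ [0,1]` gives such a seminorm.
(Hence `t ↦ |·|₁^t` is a bijection onto the set of bounded multiplicative seminorms.) -/
theorem stmt_1 {K : Type*} [Field K] (v : AbsoluteValue K ℝ)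
    (hnontrivial : ∃ x : K, x ≠ 0 ∧ v x ≠ 1)
    (hcomplete : ∀ s : ℕ → K,
      (∀ ε : ℝ, 0 < ε → ∃ N, ∀ m ≥ N, ∀ n ≥ N, v (s m - s n) < ε) →
      ∃ l : K, ∀ ε : ℝ, 0 < ε → ∃ N, ∀ n ≥ N, v (s n - l) < ε) :
    (∀ f : K → ℝ, IsMultSeminorm f →
      (∀ x : K, f x ≤ max (v x) (if x = 0 then 0 else 1)) →
      ∃! t : ℝ, t ∈ Set.Icc (0 : ℝ) 1 ∧ ∀ x : K, x ≠ 0 → f x = v x ^ t) ∧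
    (∀ t ∈ Set.Icc (0 : ℝ) 1,
      IsMultSeminorm (fun x : K => if x = 0 then 0 else v x ^ t) ∧
      ∀ x : K, (if x = 0 then (0 : ℝ) else v x ^ t) ≤
        max (v x) (if x = 0 then 0 else 1)) :=
  stmt_1_general v hnontrivial
end

section
/- Let A be a commutative ring and |·|_x, |·|_y two multiplicative seminorms on A. Suppose there exists f ∈ A with 0 < |f|_x < 1 and 0 < |f|_y < 1, and that |·|_x and |·|_y are not norm-equivalent (there is no t > 0 with |·|_x = |·|_y^t). Then there exists g ∈ A, with |g|_x > 0 and |g|_y > 0 or with one of |g|_x, |g|_y equal to 0 (using the convention log 0 = −∞), such that log|g|_x / log|f|_x ≠ log|g|_y / log|f|_y. -/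
/-- if `|·|_x, |·|_y` are non-equivalent multiplicative seminorms and `f`
satisfies `0 < |f|_x < 1`, `0 < |f|_y < 1`, then there exists `g` detecting the
non-equivalence via logarithmic ratios (with the convention `log 0 = -∞`, encoded by the
first disjunct where exactly one of `|g|_x, |g|_y` vanishes). -/
theorem stmt_4 {A : Type*} [CommRing A] (fx fy : A → ℝ)
    (hx : IsMultSeminorm fx) (hy : IsMultSeminorm fy)
    (f : A) (hfx0 : 0 < fx f) (hfx1 : fx f < 1) (hfy0 : 0 < fy f) (hfy1 : fy f < 1)
    (hneq : ¬ ∃ t : ℝ, 0 < t ∧ ∀ a, fx a = fy a ^ t) :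
    ∃ g : A, (¬ (fx g = 0 ↔ fy g = 0)) ∨
      (fx g ≠ 0 ∧ fy g ≠ 0 ∧
        Real.log (fx g) / Real.log (fx f) ≠ Real.log (fy g) / Real.log (fy f)) := by
  by_contra hcon
  push_neg at hcon
  apply hneq
  have hlx : Real.log (fx f) < 0 := Real.log_neg hfx0 hfx1
  have hly : Real.log (fy f) < 0 := Real.log_neg hfy0 hfy1
  set t : ℝ := Real.log (fx f) / Real.log (fy f) with ht
  have htpos : 0 < t := by
    rw [ht, ← neg_div_neg_eq]
    exact div_pos (neg_pos.2 hlx) (neg_pos.2 hly)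
  refine ⟨t, htpos, fun a => ?_⟩
  obtain ⟨hiff, himp⟩ := hcon a
  rcases eq_or_ne (fy a) 0 with h0 | h0
  · rw [h0, hiff.2 h0, Real.zero_rpow htpos.ne']
  · have hfx : fx a ≠ 0 := fun h => h0 (hiff.1 h)
    have hxa : 0 < fx a := lt_of_le_of_ne (hx.2.2.2.2 a) (Ne.symm hfx)
    have hya : 0 < fy a := lt_of_le_of_ne (hy.2.2.2.2 a) (Ne.symm h0)
    have heq := himp hfx h0
    have hlog : Real.log (fx a) = Real.log (fy a) * t := by
      have : Real.log (fx a) / Real.log (fx f) * Real.log (fx f)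
          = Real.log (fy a) / Real.log (fy f) * Real.log (fx f) := by rw [heq]
      rw [div_mul_cancel₀ _ hlx.ne] at this
      rw [this, ht]; ring
    rw [Real.rpow_def_of_pos hya, ← hlog, Real.exp_log hxa]
end

section
/- Let T = Spec k[M] be a split torus over a field k carrying the trivial absolute value, with character lattice M and cocharacter lattice N. For each ℝ-linear functional a : M → ℝ, the formula |Σ_{m ∈ M} c_m χ^m| = max_{m} |c_m|₀ · e^{−⟨m,a⟩} (where |·|₀ is the trivial absolute value on k) defines a multiplicative seminorm on k[M]. The resulting map emb : N_ℝ → T^an is a continuous section of the tropicalization map trop : T^an → N_ℝ, i.e. trop ∘ emb = id on N_ℝ. -/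
/-!
The Gauss norm of `c` is `exp (-v c)`, where `v c` is the minimal weight `⟨m, w⟩` over the
support of `c`. Multiplicativity amounts to `v (x * y) = v x + v y`: among the monomials of
minimal weight in `x` and `y`, the unique-sums property of `ℤⁿ` provides a pair whose sum is
reached in exactly one way, even among all monomials of `x` and `y`, so its coefficient in `x * y`
is a product of two nonzero coefficients. Continuity holds because the Gauss norm of a fixed `c`
is a finite maximum of exponentials of linear functions of `w`.
-/

open scoped Classical

namespace AddMonoidAlgebra

section MinimalWeight

variable {k M Γ : Type*} [Semiring k] [NoZeroDivisors k] [AddZeroClass M] [UniqueSums M]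
  [AddCommMonoid Γ] [PartialOrder Γ] [IsOrderedCancelAddMonoid Γ]

theorem exists_mem_support_mul_weight_eq (φ : M →+ Γ) {x y : AddMonoidAlgebra k M} {a b : M}
    (ha : a ∈ x.coeff.support) (ha_min : ∀ a' ∈ x.coeff.support, φ a ≤ φ a')
    (hb : b ∈ y.coeff.support) (hb_min : ∀ b' ∈ y.coeff.support, φ b ≤ φ b') :
    ∃ c ∈ (x * y).coeff.support, φ c = φ a + φ b := by
  set s := x.coeff.support.filter (φ · = φ a)
  set t := y.coeff.support.filter (φ · = φ b)
  obtain ⟨a₀, ha₀, b₀, hb₀, hunique⟩ := UniqueSums.uniqueAdd_of_nonempty (A := s) (B := t)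
    ⟨a, Finset.mem_filter.2 ⟨ha, rfl⟩⟩ ⟨b, Finset.mem_filter.2 ⟨hb, rfl⟩⟩
  rw [Finset.mem_filter] at ha₀ hb₀
  -- Among the monomials of minimal weight the decomposition is unique, and weight forces any
  -- other decomposition of `a₀ + b₀` to use minimal-weight monomials.
  have hunique' : UniqueAdd x.coeff.support y.coeff.support a₀ b₀ := by
    intro a' b' ha' hb' hsum
    have hweight : φ a + φ b = φ a' + φ b' := by rw [← ha₀.2, ← hb₀.2, ← map_add, ← hsum, map_add]
    obtain ⟨hφa, hφb⟩ := (add_eq_add_iff_eq_and_eq (ha_min a' ha') (hb_min b' hb')).1 hweight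
    exact hunique (Finset.mem_filter.2 ⟨ha', hφa.symm⟩) (Finset.mem_filter.2 ⟨hb', hφb.symm⟩) hsum
  refine ⟨a₀ + b₀, ?_, by rw [map_add, ha₀.2, hb₀.2]⟩
  rw [Finsupp.mem_support_iff, coeff_mul_add_of_uniqueAdd hunique']
  exact mul_ne_zero (Finsupp.mem_support_iff.1 ha₀.1) (Finsupp.mem_support_iff.1 hb₀.1)

end MinimalWeight

section GaussNorm

variable {k M : Type*} [Semiring k]

noncomputable def gaussNorm (φ : M → ℝ) (c : AddMonoidAlgebra k M) : ℝ :=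
  ⨆ m ∈ c.coeff.support, Real.exp (-φ m)

variable {φ : M → ℝ} {c : AddMonoidAlgebra k M}

theorem gaussNorm_nonneg : 0 ≤ gaussNorm φ c :=
  Real.iSup_nonneg fun _ ↦ Real.iSup_nonneg fun _ ↦ (Real.exp_pos _).le

@[simp]
theorem gaussNorm_zero : gaussNorm φ (0 : AddMonoidAlgebra k M) = 0 := by
  simp [gaussNorm]

theorem gaussNorm_eq_sup' (hc : c.coeff.support.Nonempty) :
    gaussNorm φ c = c.coeff.support.sup' hc fun m ↦ Real.exp (-φ m) := by
  obtain ⟨m, hm⟩ := hc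
  rw [gaussNorm, Finset.ciSup_eq_max'_image _ ⟨m, hm, by simpa using (Real.exp_pos _).le⟩
    (Finset.image_nonempty.2 ⟨m, hm⟩), Finset.max'_eq_sup', Finset.sup'_image]
  rfl

theorem exp_neg_le_gaussNorm {m : M} (hm : m ∈ c.coeff.support) :
    Real.exp (-φ m) ≤ gaussNorm φ c := by
  rw [gaussNorm_eq_sup' ⟨m, hm⟩]
  exact Finset.le_sup' (fun m ↦ Real.exp (-φ m)) hm

theorem gaussNorm_eq_exp_of_forall_le {m : M} (hm : m ∈ c.coeff.support)
    (hmin : ∀ m' ∈ c.coeff.support, φ m ≤ φ m') : gaussNorm φ c = Real.exp (-φ m) := by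
  rw [gaussNorm_eq_sup' ⟨m, hm⟩]
  exact le_antisymm (Finset.sup'_le _ _ fun m' hm' ↦ Real.exp_le_exp.2 (neg_le_neg (hmin m' hm')))
    (Finset.le_sup' (fun m ↦ Real.exp (-φ m)) hm)

theorem exists_gaussNorm_eq_exp (hc : c ≠ 0) :
    ∃ m ∈ c.coeff.support, (∀ m' ∈ c.coeff.support, φ m ≤ φ m') ∧
      gaussNorm φ c = Real.exp (-φ m) := by
  obtain ⟨m, hm, hmin⟩ :=
    c.coeff.support.exists_min_image φ (Finsupp.support_nonempty_iff.2 (by simpa using hc))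
  exact ⟨m, hm, hmin, gaussNorm_eq_exp_of_forall_le hm hmin⟩

theorem gaussNorm_single (m : M) {r : k} (hr : r ≠ 0) :
    gaussNorm φ (single m r) = Real.exp (-φ m) :=
  gaussNorm_eq_exp_of_forall_le (by simpa using hr) fun m' hm' ↦ by
    obtain rfl : m' = m := Finset.mem_singleton.1 (Finsupp.support_single_subset hm')
    exact le_rfl

theorem gaussNorm_add_le_max (x y : AddMonoidAlgebra k M) :
    gaussNorm φ (x + y) ≤ max (gaussNorm φ x) (gaussNorm φ y) := by
  rcases eq_or_ne (x + y) 0 with hxy | hxy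
  · rw [hxy, gaussNorm_zero]
    exact le_max_of_le_left gaussNorm_nonneg
  obtain ⟨m, hm, -, hnorm⟩ := exists_gaussNorm_eq_exp (φ := φ) hxy
  rw [hnorm]
  rcases Finset.mem_union.1 (Finsupp.support_add hm) with hx | hy
  · exact le_max_of_le_left (exp_neg_le_gaussNorm hx)
  · exact le_max_of_le_right (exp_neg_le_gaussNorm hy)

theorem gaussNorm_add_le (x y : AddMonoidAlgebra k M) :
    gaussNorm φ (x + y) ≤ gaussNorm φ x + gaussNorm φ y :=
  (gaussNorm_add_le_max x y).trans (max_le_add_of_nonneg gaussNorm_nonneg gaussNorm_nonneg)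

theorem gaussNorm_one [Nontrivial k] [AddZeroClass M] (φ : M →+ ℝ) :
    gaussNorm φ (1 : AddMonoidAlgebra k M) = 1 := by
  rw [one_def, gaussNorm_single 0 one_ne_zero, map_zero, neg_zero, Real.exp_zero]

theorem neg_log_gaussNorm_single_one [Nontrivial k] (m : M) :
    -Real.log (gaussNorm φ (single m (1 : k))) = φ m := by
  rw [gaussNorm_single m one_ne_zero, Real.log_exp, neg_neg]

theorem gaussNorm_mul [NoZeroDivisors k] [AddZeroClass M] [UniqueSums M] (φ : M →+ ℝ)
    (x y : AddMonoidAlgebra k M) :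
    gaussNorm φ (x * y) = gaussNorm φ x * gaussNorm φ y := by
  rcases eq_or_ne x 0 with rfl | hx
  · simp
  rcases eq_or_ne y 0 with rfl | hy
  · simp
  obtain ⟨a, ha, ha_min, hx_norm⟩ := exists_gaussNorm_eq_exp (φ := φ) hx
  obtain ⟨b, hb, hb_min, hy_norm⟩ := exists_gaussNorm_eq_exp (φ := φ) hy
  obtain ⟨c, hc, hφc⟩ := exists_mem_support_mul_weight_eq φ ha ha_min hb hb_min
  have hc_min : ∀ m ∈ (x * y).coeff.support, φ c ≤ φ m := by
    intro m hm
    obtain ⟨a', ha', b', hb', rfl⟩ := Finset.mem_add.1 (support_coeff_mul_subset x y hm)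
    rw [hφc, map_add]
    exact add_le_add (ha_min a' ha') (hb_min b' hb')
  rw [gaussNorm_eq_exp_of_forall_le hc hc_min, hx_norm, hy_norm, hφc, neg_add, Real.exp_add]

theorem isMultSeminorm_gaussNorm {k : Type*} [CommRing k] [IsDomain k] [AddCommMonoid M]
    [UniqueSums M] (φ : M →+ ℝ) : IsMultSeminorm (gaussNorm (k := k) φ) :=
  ⟨gaussNorm_zero, gaussNorm_one φ, gaussNorm_mul φ, gaussNorm_add_le, fun _ ↦ gaussNorm_nonneg⟩

theorem gaussNorm_algebraMap {k : Type*} [CommSemiring k] [AddMonoid M] (φ : M →+ ℝ) (r : k) :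
    gaussNorm φ (algebraMap k (AddMonoidAlgebra k M) r) = if r = 0 then 0 else 1 := by
  rcases eq_or_ne r 0 with rfl | hr
  · simp
  rw [if_neg hr, coe_algebraMap, Function.comp_apply, Algebra.algebraMap_self, RingHom.id_apply,
    gaussNorm_single 0 hr, map_zero, neg_zero, Real.exp_zero]

theorem continuous_gaussNorm {X : Type*} [TopologicalSpace X] {φ : X → M → ℝ}
    (hφ : ∀ m, Continuous fun x ↦ φ x m) (c : AddMonoidAlgebra k M) :
    Continuous fun x ↦ gaussNorm (φ x) c := by
  rcases c.coeff.support.eq_empty_or_nonempty with hc | hc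
  · simpa [gaussNorm, hc] using continuous_const
  simp_rw [gaussNorm_eq_sup' hc]
  exact Continuous.finset_sup'_apply hc fun m _ ↦ ((hφ m).neg).rexp

end GaussNorm

end AddMonoidAlgebra

open AddMonoidAlgebra

def latticePairing {ι : Type*} [Fintype ι] (w : ι → ℝ) : (ι → ℤ) →+ ℝ where
  toFun m := ∑ i, (m i : ℝ) * w i
  map_zero' := by simp
  map_add' m m' := by simp [add_mul, Finset.sum_add_distrib]

theorem continuous_latticePairing_apply {ι : Type*} [Fintype ι] (m : ι → ℤ) :
    Continuous fun w : ι → ℝ ↦ latticePairing w m := by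
  change Continuous fun w : ι → ℝ ↦ ∑ i, (m i : ℝ) * w i
  fun_prop

/-- over a trivially valued field `k`, for each linear functional
`w ∈ N_ℝ ≅ ℝⁿ` the Gauss formula `|Σ c_m χ^m| = max_{m ∈ supp c} e^{-⟨m,w⟩}` defines a
multiplicative seminorm on `k[M]` (`M = ℤⁿ`) bounded by the trivial norm on `k`; the
resulting map `emb : N_ℝ → T^an` is continuous (into the topology of pointwise
convergence) and is a section of tropicalization: `trop ∘ emb = id`, i.e.
`-log |χ^m|_{emb w} = ⟨m, w⟩`. -/
theorem stmt_8 {k : Type*} [Field k] (n : ℕ)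
    (emb : (Fin n → ℝ) → AddMonoidAlgebra k (Fin n → ℤ) → ℝ)
    (hemb : ∀ w c, emb w c = ⨆ m ∈ c.coeff.support, Real.exp (-(∑ i, (m i : ℝ) * w i))) :
    (∀ w, IsMultSeminorm (emb w)) ∧
    (∀ w (c : k), emb w (algebraMap k (AddMonoidAlgebra k (Fin n → ℤ)) c) =
      if c = 0 then 0 else 1) ∧
    Continuous emb ∧
    (∀ w (m : Fin n → ℤ),
      -Real.log (emb w (AddMonoidAlgebra.single m 1)) = ∑ i, (m i : ℝ) * w i) := by
  obtain rfl : emb = fun w ↦ gaussNorm (latticePairing w) := funext₂ hemb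
  exact ⟨fun w ↦ isMultSeminorm_gaussNorm _, fun w ↦ gaussNorm_algebraMap _,
    continuous_pi (continuous_gaussNorm continuous_latticePairing_apply),
    fun w ↦ neg_log_gaussNorm_single_one⟩
end

section
/- Let T = 𝔾_m^n be a torus with cocharacter lattice N ≅ ℤ^n, and let N_ℝ = ℝ^n. The set PL(N_ℝ) of continuous, conical (positively homogeneous of degree 1), piecewise-linear functions f : N_ℝ → ℝ whose domains of linearity form a finite rational polyhedral fan and which take integer values on N, is: (a) closed under addition; (b) closed under pointwise minimum; (c) separates points of the unit sphere Σ ⊂ N_ℝ. Consequently the ℚ-span of PL(N_ℝ), restricted to Σ, is dense in C(Σ,ℝ), and hence every continuous conical function on N_ℝ is a uniform-on-compacts limit of ℚ-linear combinations of such piecewise linear functions. -/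
/-- A rational polyhedral cone in `ℝⁿ`: intersection of finitely many rational
half-spaces. -/
def IsRatCone (n : ℕ) (σ : Set (Fin n → ℝ)) : Prop :=
  ∃ L : Finset (Fin n → ℚ), σ = {x | ∀ l ∈ L, 0 ≤ ∑ i, (l i : ℝ) * x i}

/-- Continuous, conical, piecewise-linear functions on `ℝⁿ` whose domains of linearity
are given by a finite family of rational polyhedral cones covering `ℝⁿ`, taking integer
values on the lattice `ℤⁿ`. -/
def IsPL (n : ℕ) (f : (Fin n → ℝ) → ℝ) : Prop :=
  Continuous f ∧
  (∀ c : ℝ, 0 < c → ∀ x, f (c • x) = c * f x) ∧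
  (∀ m : Fin n → ℤ, ∃ z : ℤ, f (fun i => (m i : ℝ)) = (z : ℝ)) ∧
  ∃ C : Finset (Set (Fin n → ℝ)), (∀ σ ∈ C, IsRatCone n σ) ∧
    (∀ x : Fin n → ℝ, ∃ σ ∈ C, x ∈ σ) ∧
    ∀ σ ∈ C, ∃ l : Fin n → ℝ, ∀ x ∈ σ, f x = ∑ i, l i * x i

/-!
Sums and minima of PL functions are linear on the cones of a common refinement of their fans.
For the minimum one splits each full-dimensional cone further along the hyperplane where the two
linear pieces agree; this hyperplane is rational because a linear form taking integer values at
the lattice points of a full-dimensional cone has integer coefficients.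

By homogeneity, approximation on compact sets reduces to the unit sphere. There the restrictions
of the `ℚ`-span form a `ℚ`-vector lattice whose closure is a real vector lattice containing all
linear forms. By Hahn–Banach, positive parts of linear forms separate any two points of the
sphere, so the lattice version of Stone–Weierstrass applies.
-/

lemma exists_mem_nonempty_interior_of_isClosed_cover {X : Type*} [TopologicalSpace X]
    [BaireSpace X] {C : Finset (Set X)} (hC : ∀ σ ∈ C, IsClosed σ)
    (hcov : ∀ x, ∃ σ ∈ C, x ∈ σ) (x : X) : ∃ σ ∈ C, (interior σ).Nonempty ∧ x ∈ σ := by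
  classical
  have hdense : Dense (⋃ σ ∈ (C : Set (Set X)), interior σ) :=
    dense_biUnion_interior_of_closed hC C.countable_toSet
      (Set.eq_univ_of_forall fun y => by simpa using hcov y)
  have hsub : closure (⋃ σ ∈ (C : Set (Set X)), interior σ) ⊆
      ⋃ σ ∈ C.filter fun σ => (interior σ).Nonempty, σ := by
    refine closure_minimal ?_ (isClosed_biUnion_finset fun σ hσ => hC σ (Finset.mem_filter.1 hσ).1)
    simp only [Set.iUnion_subset_iff]
    intro σ hσ y hy
    exact Set.mem_biUnion (Finset.mem_filter.2 ⟨hσ, y, hy⟩) (interior_subset hy)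
  simpa [and_assoc] using hsub (hdense.closure_eq ▸ Set.mem_univ x)

theorem Submodule.mem_span_rat_iff_exists_nsmul_mem {V : Type*} [AddCommGroup V] [Module ℚ V]
    (G : AddSubgroup V) {x : V} :
    x ∈ Submodule.span ℚ (G : Set V) ↔ ∃ d : ℕ, 0 < d ∧ d • x ∈ G := by
  refine ⟨fun hx => ?_, fun ⟨d, hd, hdx⟩ => ?_⟩
  · induction hx using Submodule.span_induction with
    | mem x hx => exact ⟨1, one_pos, by simpa using hx⟩
    | zero => exact ⟨1, one_pos, by simp⟩
    | add x y _ _ hx hy =>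
      obtain ⟨d, hd, hdx⟩ := hx
      obtain ⟨e, he, hey⟩ := hy
      refine ⟨d * e, Nat.mul_pos hd he, ?_⟩
      rw [smul_add, mul_nsmul, mul_nsmul']
      exact G.add_mem (G.nsmul_mem hdx e) (G.nsmul_mem hey d)
    | smul q x _ hx =>
      obtain ⟨d, hd, hdx⟩ := hx
      refine ⟨q.den * d, Nat.mul_pos q.den_pos hd, ?_⟩
      have hq : (q.den * d : ℕ) • q • x = q.num • d • x := by
        rw [← Nat.cast_smul_eq_nsmul ℚ, ← Nat.cast_smul_eq_nsmul ℚ d, ← Int.cast_smul_eq_zsmul ℚ,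
          smul_smul, smul_smul, Nat.cast_mul, mul_comm (q.den : ℚ), mul_assoc, Rat.den_mul_eq_num,
          mul_comm]
      rw [hq]
      exact G.zsmul_mem hdx _
  · have hx : x = (d : ℚ)⁻¹ • d • x := by
      rw [← Nat.cast_smul_eq_nsmul ℚ, smul_smul, inv_mul_cancel₀ (by positivity), one_smul]
    rw [hx]
    exact Submodule.smul_mem _ _ (Submodule.subset_span hdx)

lemma Submodule.real_smul_mem_of_isClosed {E : Type*} [AddCommGroup E] [TopologicalSpace E]
    [Module ℝ E] [ContinuousSMul ℝ E] [Module ℚ E] (M : Submodule ℚ E)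
    (hM : IsClosed (M : Set E)) (r : ℝ) {x : E} (hx : x ∈ M) : r • x ∈ M := by
  have hclosed : IsClosed {r : ℝ | r • x ∈ M} := hM.preimage (continuous_id.smul continuous_const)
  have hrat : Set.range ((↑) : ℚ → ℝ) ⊆ {r : ℝ | r • x ∈ M} := by
    rintro _ ⟨q, rfl⟩
    simpa [Rat.cast_smul_eq_qsmul] using M.smul_mem q hx
  exact hclosed.closure_subset_iff.2 hrat
    ((Rat.denseRange_cast (𝕜 := ℝ)).closure_range ▸ Set.mem_univ r)

instance ContinuousMap.continuousInf {α β : Type*} [TopologicalSpace α] [LocallyCompactSpace α]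
    [TopologicalSpace β] [SemilatticeInf β] [ContinuousInf β] : ContinuousInf C(α, β) :=
  ⟨by
    refine continuous_of_continuous_uncurry _ ?_
    have h₁ : Continuous fun p : (C(α, β) × C(α, β)) × α => p.1.1 p.2 :=
      continuous_eval.comp (continuous_fst.prodMap continuous_id)
    have h₂ : Continuous fun p : (C(α, β) × C(α, β)) × α => p.1.2 p.2 :=
      continuous_eval.comp (continuous_snd.prodMap continuous_id)
    exact h₁.inf h₂⟩

namespace ContinuousMap

variable {X : Type*} [TopologicalSpace X] (M : Submodule ℚ C(X, ℝ))

lemma inf_mem_topologicalClosure [LocallyCompactSpace X] (hM : ∀ F ∈ M, ∀ G ∈ M, F ⊓ G ∈ M)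
    {F G : C(X, ℝ)} (hF : F ∈ M.topologicalClosure) (hG : G ∈ M.topologicalClosure) :
    F ⊓ G ∈ M.topologicalClosure :=
  map_mem_closure₂ continuous_inf hF hG hM

lemma sup_mem_topologicalClosure [LocallyCompactSpace X] (hM : ∀ F ∈ M, ∀ G ∈ M, F ⊓ G ∈ M)
    {F G : C(X, ℝ)} (hF : F ∈ M.topologicalClosure) (hG : G ∈ M.topologicalClosure) :
    F ⊔ G ∈ M.topologicalClosure := by
  rw [eq_sub_of_add_eq' (inf_add_sup F G)]
  exact sub_mem (add_mem hF hG) (inf_mem_topologicalClosure M hM hF hG)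

theorem dense_of_inf_mem [CompactSpace X] [LocallyCompactSpace X]
    (hM : ∀ F ∈ M, ∀ G ∈ M, F ⊓ G ∈ M)
    (hsep : ∀ x y, x ≠ y → ∃ F ∈ M.topologicalClosure, F x = 1 ∧ F y = 0)
    (hone : ∀ x, ∃ F ∈ M.topologicalClosure, F x = 1) :
    Dense (M : Set C(X, ℝ)) := by
  set S := M.topologicalClosure
  have hsmul : ∀ (r : ℝ) {F}, F ∈ S → r • F ∈ S := fun r _ hF =>
    S.real_smul_mem_of_isClosed M.isClosed_topologicalClosure r hF
  have hstrong : (S : Set C(X, ℝ)).SeparatesPointsStrongly := by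
    intro v x y
    rcases eq_or_ne x y with rfl | hxy
    · obtain ⟨F, hF, hFx⟩ := hone x
      exact ⟨v x • F, hsmul _ hF, by simp [hFx], by simp [hFx]⟩
    · obtain ⟨F, hF, hFx, hFy⟩ := hsep x y hxy
      obtain ⟨G, hG, hGy, hGx⟩ := hsep y x hxy.symm
      exact ⟨v x • F + v y • G, add_mem (hsmul _ hF) (hsmul _ hG), by simp [*], by simp [*]⟩
  have htop := sublattice_closure_eq_top (S : Set C(X, ℝ)) ⟨0, S.zero_mem⟩
    (fun F hF G hG => inf_mem_topologicalClosure M hM hF hG)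
    (fun F hF G hG => sup_mem_topologicalClosure M hM hF hG) hstrong
  rw [Submodule.topologicalClosure_coe, closure_closure] at htop
  exact dense_iff_closure_eq.2 htop

end ContinuousMap

lemma exists_dual_pos_nonpos_of_notMem_ray {E : Type*} [NormedAddCommGroup E] [NormedSpace ℝ E]
    {x y : E} (h : ∀ c : ℝ, 0 ≤ c → x ≠ c • y) : ∃ f : StrongDual ℝ E, 0 < f x ∧ f y ≤ 0 := by
  set ray : Set E := (fun c : ℝ => c • y) '' Set.Ici 0
  have hconv : Convex ℝ ray := (convex_Ici 0).linear_image (LinearMap.toSpanSingleton ℝ E y)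
  have hclosed : IsClosed ray := isClosedMap_smul_left y _ isClosed_Ici
  have hx : x ∉ ray := by
    rintro ⟨c, hc, rfl⟩
    exact h c hc rfl
  obtain ⟨f, u, hfx, hf⟩ := geometric_hahn_banach_point_closed hconv hclosed hx
  have hu : u < 0 := by simpa using hf 0 ⟨0, Set.mem_Ici.2 le_rfl, zero_smul _ _⟩
  refine ⟨-f, by simp; linarith, ?_⟩
  simp only [neg_apply, neg_nonpos]
  by_contra! hfy
  -- the point `(u / f y) • y` of the ray would lie on the separating hyperplane
  have := hf ((u / f y) • y) ⟨u / f y, div_nonneg_of_nonpos hu.le hfy.le, rfl⟩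
  rw [map_smul, smul_eq_mul, div_mul_cancel₀ _ hfy.ne] at this
  exact lt_irrefl _ this

lemma ne_smul_of_norm_eq_one {E : Type*} [NormedAddCommGroup E] [NormedSpace ℝ E] {x y : E}
    (hx : ‖x‖ = 1) (hy : ‖y‖ = 1) (hxy : x ≠ y) {c : ℝ} (hc : 0 ≤ c) : x ≠ c • y := by
  rintro rfl
  have hc1 : c = 1 := by simpa [norm_smul, abs_of_nonneg hc, hy] using hx
  exact hxy (by rw [hc1, one_smul])

def IsConical {E : Type*} [SMul ℝ E] (f : E → ℝ) : Prop :=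
  ∀ c : ℝ, 0 < c → ∀ x, f (c • x) = c * f x

lemma IsConical.sub {E : Type*} [SMul ℝ E] {g h : E → ℝ} (hg : IsConical g) (hh : IsConical h) :
    IsConical (g - h) := fun c hc x => by simp [hg c hc, hh c hc, mul_sub]

lemma IsConical.of_nsmul {E : Type*} [SMul ℝ E] {h : E → ℝ} {d : ℕ} (hd : d ≠ 0)
    (H : IsConical (d • h)) : IsConical h := fun c hc x => by
  have := H c hc x
  simp only [Pi.smul_apply, nsmul_eq_mul] at this
  exact mul_left_cancel₀ (Nat.cast_ne_zero.2 hd) (by rw [this]; ring)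

lemma IsConical.apply_zero {E : Type*} [AddCommGroup E] [Module ℝ E] {h : E → ℝ}
    (hh : IsConical h) : h 0 = 0 := by
  have := hh 2 two_pos 0
  rw [smul_zero] at this
  linarith

lemma IsConical.abs_le_mul_norm {E : Type*} [NormedAddCommGroup E] [NormedSpace ℝ E]
    {h : E → ℝ} (hh : IsConical h) {δ : ℝ} (hδ : ∀ s, ‖s‖ = 1 → |h s| ≤ δ) (x : E) :
    |h x| ≤ δ * ‖x‖ := by
  rcases eq_or_ne x 0 with rfl | hx
  · simp [hh.apply_zero]
  have hxpos : 0 < ‖x‖ := norm_pos_iff.2 hx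
  have hdecomp : h x = ‖x‖ * h (‖x‖⁻¹ • x) := by
    rw [← hh _ hxpos, smul_smul, mul_inv_cancel₀ hxpos.ne', one_smul]
  rw [hdecomp, abs_mul, abs_of_pos hxpos, mul_comm]
  exact mul_le_mul_of_nonneg_right (hδ _ (norm_smul_inv_norm hx)) hxpos.le

namespace IsRatCone

variable {n : ℕ} {σ τ : Set (Fin n → ℝ)}

lemma univ : IsRatCone n Set.univ := ⟨∅, by simp⟩

lemma halfspace (c : Fin n → ℚ) : IsRatCone n {x | 0 ≤ ∑ i, (c i : ℝ) * x i} :=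
  ⟨{c}, by simp⟩

lemma inter (hσ : IsRatCone n σ) (hτ : IsRatCone n τ) : IsRatCone n (σ ∩ τ) := by
  classical
  obtain ⟨L, rfl⟩ := hσ
  obtain ⟨M, rfl⟩ := hτ
  exact ⟨L ∪ M, by ext x; simp [or_imp, forall_and]⟩

lemma isClosed (hσ : IsRatCone n σ) : IsClosed σ := by
  obtain ⟨L, rfl⟩ := hσ
  simp only [Set.ofPred_forall]
  exact isClosed_biInter fun l _ => isClosed_le continuous_const (by fun_prop)

lemma smul_mem (hσ : IsRatCone n σ) {c : ℝ} (hc : 0 ≤ c) {x : Fin n → ℝ} (hx : x ∈ σ) :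
    c • x ∈ σ := by
  obtain ⟨L, rfl⟩ := hσ
  intro l hl
  simpa [Finset.mul_sum, mul_left_comm] using mul_nonneg hc (hx l hl)

lemma exists_int_add_mem {σ : Set (Fin n → ℝ)} (hσ : IsRatCone n σ)
    (hne : (interior σ).Nonempty) :
    ∃ m : Fin n → ℤ, ∀ v : Fin n → ℤ, (∀ i, |v i| ≤ 1) → (fun i => ((m + v) i : ℝ)) ∈ σ := by
  obtain ⟨x₀, hx₀⟩ := hne
  obtain ⟨ε, hε, hball⟩ := Metric.isOpen_iff.1 isOpen_interior x₀ hx₀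
  set t : ℝ := 2 / ε with ht
  have htpos : 0 < t := by positivity
  set m : Fin n → ℤ := fun i => round (t * x₀ i)
  refine ⟨m, fun v hv => ?_⟩
  set p : Fin n → ℝ := fun i => ((m + v) i : ℝ)
  -- `p` lies within `3 / 2` of `t • x₀`, and `t • ball x₀ ε = ball (t • x₀) 2`
  have hp : t⁻¹ • p ∈ σ := by
    refine interior_subset (hball ?_)
    rw [Metric.mem_ball, dist_pi_lt_iff hε]
    intro i
    have hround : |(m i : ℝ) - t * x₀ i| ≤ 1 / 2 := by
      rw [abs_sub_comm]
      exact abs_sub_round _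
    have hvi : |(v i : ℝ)| ≤ 1 := by exact_mod_cast hv i
    have hpi : (t⁻¹ • p) i - x₀ i = t⁻¹ * ((m i - t * x₀ i) + v i) := by
      simp only [p, Pi.smul_apply, Pi.add_apply, smul_eq_mul, Int.cast_add]
      field_simp
      ring
    rw [Real.dist_eq, hpi, abs_mul, abs_inv, abs_of_pos htpos, ht]
    calc (2 / ε)⁻¹ * |(m i - t * x₀ i) + v i| ≤ (2 / ε)⁻¹ * (1 / 2 + 1) := by
          gcongr
          exact (abs_add_le _ _).trans (add_le_add hround hvi)
      _ < ε := by field_simp; norm_num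
  simpa [smul_smul, htpos.ne'] using hσ.smul_mem htpos.le hp

end IsRatCone

def IsRatFan (n : ℕ) (C : Finset (Set (Fin n → ℝ))) : Prop :=
  (∀ σ ∈ C, IsRatCone n σ) ∧ ∀ x, ∃ σ ∈ C, x ∈ σ

def IsLinearOn (n : ℕ) (f : (Fin n → ℝ) → ℝ) (σ : Set (Fin n → ℝ)) : Prop :=
  ∃ l : Fin n → ℝ, ∀ x ∈ σ, f x = ∑ i, l i * x i

def IsIntegralOnLattice (n : ℕ) (f : (Fin n → ℝ) → ℝ) : Prop :=
  ∀ m : Fin n → ℤ, ∃ z : ℤ, f (fun i => (m i : ℝ)) = z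

section

variable {n : ℕ} {f g : (Fin n → ℝ) → ℝ}

lemma isPL_iff : IsPL n f ↔ Continuous f ∧ IsConical f ∧ IsIntegralOnLattice n f ∧
    ∃ C, IsRatFan n C ∧ ∀ σ ∈ C, IsLinearOn n f σ := by
  simp only [IsPL, IsRatFan, IsLinearOn, IsConical, IsIntegralOnLattice, and_assoc]

namespace IsRatFan

lemma singleton_univ : IsRatFan n {Set.univ} :=
  ⟨by simpa using IsRatCone.univ, fun x => ⟨_, Finset.mem_singleton_self _, Set.mem_univ x⟩⟩

lemma exists_subfan_nonempty_interior {C : Finset (Set (Fin n → ℝ))} (hC : IsRatFan n C) :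
    ∃ E ⊆ C, IsRatFan n E ∧ ∀ σ ∈ E, (interior σ).Nonempty := by
  classical
  refine ⟨C.filter fun σ => (interior σ).Nonempty, Finset.filter_subset _ _,
    ⟨fun σ hσ => hC.1 σ (Finset.mem_filter.1 hσ).1, fun x => ?_⟩,
    fun σ hσ => (Finset.mem_filter.1 hσ).2⟩
  obtain ⟨σ, hσ, hint, hx⟩ := exists_mem_nonempty_interior_of_isClosed_cover
    (fun σ hσ => (hC.1 σ hσ).isClosed) hC.2 x
  exact ⟨σ, Finset.mem_filter.2 ⟨hσ, hint⟩, hx⟩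

end IsRatFan

lemma IsPL.exists_common_fan (hf : IsPL n f) (hg : IsPL n g) :
    ∃ E, IsRatFan n E ∧ ∀ ρ ∈ E, IsLinearOn n f ρ ∧ IsLinearOn n g ρ := by
  classical
  obtain ⟨-, -, -, C, ⟨hCrat, hCcov⟩, hClin⟩ := isPL_iff.1 hf
  obtain ⟨-, -, -, D, ⟨hDrat, hDcov⟩, hDlin⟩ := isPL_iff.1 hg
  refine ⟨Finset.image₂ (· ∩ ·) C D, ⟨?_, fun x => ?_⟩, ?_⟩
  · simp only [Finset.mem_image₂]
    rintro _ ⟨σ, hσ, τ, hτ, rfl⟩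
    exact (hCrat σ hσ).inter (hDrat τ hτ)
  · obtain ⟨σ, hσ, hxσ⟩ := hCcov x
    obtain ⟨τ, hτ, hxτ⟩ := hDcov x
    exact ⟨σ ∩ τ, Finset.mem_image₂_of_mem hσ hτ, hxσ, hxτ⟩
  · simp only [Finset.mem_image₂]
    rintro _ ⟨σ, hσ, τ, hτ, rfl⟩
    obtain ⟨l, hl⟩ := hClin σ hσ
    obtain ⟨l', hl'⟩ := hDlin τ hτ
    exact ⟨⟨l, fun x hx => hl x hx.1⟩, ⟨l', fun x hx => hl' x hx.2⟩⟩

lemma IsLinearOn.exists_int_coeffs {σ : Set (Fin n → ℝ)} (hσ : IsRatCone n σ)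
    (hne : (interior σ).Nonempty) (hf : IsLinearOn n f σ) (hint : IsIntegralOnLattice n f) :
    ∃ a : Fin n → ℤ, ∀ x ∈ σ, f x = ∑ i, (a i : ℝ) * x i := by
  classical
  obtain ⟨l, hl⟩ := hf
  obtain ⟨m, hm⟩ := hσ.exists_int_add_mem hne
  have hcoeff : ∀ j, ∃ z : ℤ, l j = z := by
    intro j
    have h₀ := hm 0 (by simp)
    have h₁ := hm (Pi.single j 1) fun i => by
      rcases eq_or_ne i j with rfl | hij <;> simp [*]
    obtain ⟨z₀, hz₀⟩ := hint (m + 0)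
    obtain ⟨z₁, hz₁⟩ := hint (m + Pi.single j 1)
    -- `l j` is the difference of the values of `f` at two lattice points of `σ`
    refine ⟨z₁ - z₀, ?_⟩
    rw [hl _ h₀] at hz₀
    rw [hl _ h₁] at hz₁
    simp only [Pi.add_apply, Int.cast_add, mul_add, Finset.sum_add_distrib] at hz₀ hz₁
    simp [Pi.single_apply] at hz₀ hz₁
    push_cast
    linarith
  choose a ha using hcoeff
  exact ⟨a, fun x hx => by simp [hl x hx, ha]⟩

lemma IsRatCone.inter_setOf_le {ρ : Set (Fin n → ℝ)} (hρ : IsRatCone n ρ) {a b : Fin n → ℤ}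
    (ha : ∀ x ∈ ρ, f x = ∑ i, (a i : ℝ) * x i) (hb : ∀ x ∈ ρ, g x = ∑ i, (b i : ℝ) * x i) :
    IsRatCone n (ρ ∩ {x | f x ≤ g x}) := by
  have hsplit : ρ ∩ {x | f x ≤ g x} =
      ρ ∩ {x | 0 ≤ ∑ i, (((b i - a i : ℤ) : ℚ) : ℝ) * x i} := by
    ext x
    refine and_congr_right fun hx => ?_
    simp [ha x hx, hb x hx, sub_mul]
  rw [hsplit]
  exact hρ.inter (IsRatCone.halfspace _)

namespace IsPL

lemma continuous (hf : IsPL n f) : Continuous f := hf.1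

lemma isConical (hf : IsPL n f) : IsConical f := hf.2.1

lemma isIntegralOnLattice (hf : IsPL n f) : IsIntegralOnLattice n f := hf.2.2.1

lemma add (hf : IsPL n f) (hg : IsPL n g) : IsPL n (f + g) := by
  obtain ⟨E, hE, hlin⟩ := hf.exists_common_fan hg
  refine isPL_iff.2 ⟨hf.continuous.add hg.continuous, fun c hc x => ?_, fun m => ?_,
    E, hE, fun ρ hρ => ?_⟩
  · simp [hf.isConical c hc, hg.isConical c hc, mul_add]
  · obtain ⟨z₁, h₁⟩ := hf.isIntegralOnLattice m
    obtain ⟨z₂, h₂⟩ := hg.isIntegralOnLattice m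
    exact ⟨z₁ + z₂, by simp [h₁, h₂]⟩
  · obtain ⟨⟨l₁, h₁⟩, ⟨l₂, h₂⟩⟩ := hlin ρ hρ
    exact ⟨l₁ + l₂, fun x hx => by simp [h₁ x hx, h₂ x hx, add_mul, Finset.sum_add_distrib]⟩

lemma neg (hf : IsPL n f) : IsPL n (-f) := by
  obtain ⟨-, -, -, C, hC, hlin⟩ := isPL_iff.1 hf
  refine isPL_iff.2 ⟨hf.continuous.neg, fun c hc x => ?_, fun m => ?_, C, hC, fun σ hσ => ?_⟩
  · simp [hf.isConical c hc]
  · obtain ⟨z, h⟩ := hf.isIntegralOnLattice m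
    exact ⟨-z, by simp [h]⟩
  · obtain ⟨l, hl⟩ := hlin σ hσ
    exact ⟨-l, fun x hx => by simp [hl x hx]⟩

lemma min (hf : IsPL n f) (hg : IsPL n g) : IsPL n (fun x => min (f x) (g x)) := by
  classical
  obtain ⟨E, hE, hlin⟩ := hf.exists_common_fan hg
  obtain ⟨E₁, hE₁E, ⟨hE₁rat, hE₁cov⟩, hE₁int⟩ := hE.exists_subfan_nonempty_interior
  have hcoeffs : ∀ ρ ∈ E₁, ∃ a b : Fin n → ℤ,
      (∀ x ∈ ρ, f x = ∑ i, (a i : ℝ) * x i) ∧ ∀ x ∈ ρ, g x = ∑ i, (b i : ℝ) * x i := by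
    intro ρ hρ
    obtain ⟨hfρ, hgρ⟩ := hlin ρ (hE₁E hρ)
    obtain ⟨a, ha⟩ := hfρ.exists_int_coeffs (hE₁rat ρ hρ) (hE₁int ρ hρ) hf.isIntegralOnLattice
    obtain ⟨b, hb⟩ := hgρ.exists_int_coeffs (hE₁rat ρ hρ) (hE₁int ρ hρ) hg.isIntegralOnLattice
    exact ⟨a, b, ha, hb⟩
  choose! a b ha hb using hcoeffs
  refine isPL_iff.2 ⟨hf.continuous.min hg.continuous, fun c hc x => ?_, fun m => ?_,
    E₁.biUnion fun ρ => {ρ ∩ {x | f x ≤ g x}, ρ ∩ {x | g x ≤ f x}}, ⟨?_, fun x => ?_⟩, ?_⟩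
  · simp [hf.isConical c hc, hg.isConical c hc, mul_min_of_nonneg _ _ hc.le]
  · obtain ⟨z₁, h₁⟩ := hf.isIntegralOnLattice m
    obtain ⟨z₂, h₂⟩ := hg.isIntegralOnLattice m
    exact ⟨Min.min z₁ z₂, by simp [h₁, h₂]⟩
  · simp only [Finset.mem_biUnion, Finset.mem_insert, Finset.mem_singleton]
    rintro _ ⟨ρ, hρ, rfl | rfl⟩
    · exact (hE₁rat ρ hρ).inter_setOf_le (ha ρ hρ) (hb ρ hρ)
    · exact (hE₁rat ρ hρ).inter_setOf_le (hb ρ hρ) (ha ρ hρ)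
  · obtain ⟨ρ, hρ, hx⟩ := hE₁cov x
    simp only [Finset.mem_biUnion, Finset.mem_insert, Finset.mem_singleton]
    rcases le_total (f x) (g x) with hle | hle
    · exact ⟨_, ⟨ρ, hρ, Or.inl rfl⟩, hx, hle⟩
    · exact ⟨_, ⟨ρ, hρ, Or.inr rfl⟩, hx, hle⟩
  · simp only [Finset.mem_biUnion, Finset.mem_insert, Finset.mem_singleton]
    rintro _ ⟨ρ, hρ, rfl | rfl⟩
    · exact ⟨fun i => a ρ i, fun x hx => (min_eq_left hx.2).trans (ha ρ hρ x hx.1)⟩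
    · exact ⟨fun i => b ρ i, fun x hx => (min_eq_right hx.2).trans (hb ρ hρ x hx.1)⟩

end IsPL

lemma isPL_zero : IsPL n 0 :=
  isPL_iff.2 ⟨continuous_const, fun c _ x => by simp, fun _ => ⟨0, by simp⟩,
    _, IsRatFan.singleton_univ, fun _ _ => ⟨0, fun x _ => by simp⟩⟩

lemma isPL_apply (j : Fin n) : IsPL n fun x => x j :=
  isPL_iff.2 ⟨continuous_apply j, fun c _ x => by simp, fun m => ⟨m j, rfl⟩,
    _, IsRatFan.singleton_univ, fun _ _ => ⟨Pi.single j 1, fun x _ => by simp [Pi.single_apply]⟩⟩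

variable (n) in
def plAddSubgroup : AddSubgroup ((Fin n → ℝ) → ℝ) where
  carrier := {f | IsPL n f}
  zero_mem' := isPL_zero
  add_mem' := IsPL.add
  neg_mem' := IsPL.neg

variable (n) in
noncomputable def plSpan : Submodule ℚ ((Fin n → ℝ) → ℝ) :=
  Submodule.span ℚ (plAddSubgroup n : Set ((Fin n → ℝ) → ℝ))

lemma exists_nsmul_isPL_of_mem_plSpan {h : (Fin n → ℝ) → ℝ} (hh : h ∈ plSpan n) :
    ∃ d : ℕ, 0 < d ∧ IsPL n (d • h) :=
  (Submodule.mem_span_rat_iff_exists_nsmul_mem (plAddSubgroup n)).1 hh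

lemma continuous_of_mem_plSpan {h : (Fin n → ℝ) → ℝ} (hh : h ∈ plSpan n) : Continuous h := by
  obtain ⟨d, hd, hdh⟩ := exists_nsmul_isPL_of_mem_plSpan hh
  refine (continuous_const_smul_iff₀ (Nat.cast_ne_zero.2 hd.ne' : (d : ℝ) ≠ 0)).1 ?_
  convert hdh.continuous using 1
  funext x
  simp [nsmul_eq_mul]

lemma isConical_of_mem_plSpan {h : (Fin n → ℝ) → ℝ} (hh : h ∈ plSpan n) : IsConical h := by
  obtain ⟨d, hd, hdh⟩ := exists_nsmul_isPL_of_mem_plSpan hh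
  exact IsConical.of_nsmul hd.ne' hdh.isConical

lemma min_mem_plSpan {h₁ h₂ : (Fin n → ℝ) → ℝ} (hh₁ : h₁ ∈ plSpan n) (hh₂ : h₂ ∈ plSpan n) :
    (fun x => min (h₁ x) (h₂ x)) ∈ plSpan n := by
  obtain ⟨d, hd, hdh₁⟩ := exists_nsmul_isPL_of_mem_plSpan hh₁
  obtain ⟨e, he, heh₂⟩ := exists_nsmul_isPL_of_mem_plSpan hh₂
  refine (Submodule.mem_span_rat_iff_exists_nsmul_mem (plAddSubgroup n)).2
    ⟨d * e, Nat.mul_pos hd he, ?_⟩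
  have hmin : (d * e) • (fun x => min (h₁ x) (h₂ x)) =
      fun x => min ((e • d • h₁) x) ((d • e • h₂) x) := by
    funext x
    simp only [Pi.smul_apply]
    simp only [nsmul_eq_mul, Nat.cast_mul, mul_min_of_nonneg _ _ (by positivity : (0 : ℝ) ≤ d * e)]
    ring_nf
  rw [hmin]
  exact ((plAddSubgroup n).nsmul_mem hdh₁ e).min ((plAddSubgroup n).nsmul_mem heh₂ d)

local notation "𝕊" n:max => Metric.sphere (0 : Fin n → ℝ) 1

variable (n) in
noncomputable def sphereSpan : Submodule ℚ C(𝕊 n, ℝ) :=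
  ((plSpan n).map (LinearMap.funLeft ℚ ℝ Subtype.val)).comap (ContinuousMap.coeFnLinearMap ℚ)

lemma mem_sphereSpan {F : C(𝕊 n, ℝ)} :
    F ∈ sphereSpan n ↔ ∃ h ∈ plSpan n, ∀ s : 𝕊 n, h s = F s := by
  simp [sphereSpan, funext_iff]

lemma sphereSpan_inf_mem : ∀ F ∈ sphereSpan n, ∀ G ∈ sphereSpan n, F ⊓ G ∈ sphereSpan n := by
  intro F hF G hG
  obtain ⟨h₁, hh₁, hF⟩ := mem_sphereSpan.1 hF
  obtain ⟨h₂, hh₂, hG⟩ := mem_sphereSpan.1 hG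
  exact mem_sphereSpan.2 ⟨_, min_mem_plSpan hh₁ hh₂, fun s => by simp [hF, hG]⟩

lemma restrict_mem_topologicalClosure_sphereSpan (f : StrongDual ℝ (Fin n → ℝ)) :
    ContinuousMap.restrict (𝕊 n) f ∈ (sphereSpan n).topologicalClosure := by
  classical
  set coord : Fin n → C(𝕊 n, ℝ) := fun i =>
    ⟨fun s => (s : Fin n → ℝ) i, (continuous_apply i).comp continuous_subtype_val⟩
  have hcoord : ∀ i, coord i ∈ sphereSpan n := fun i =>
    mem_sphereSpan.2 ⟨_, Submodule.subset_span (isPL_apply i), fun _ => rfl⟩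
  have hf : ContinuousMap.restrict (𝕊 n) f = ∑ i, f (Pi.single i 1) • coord i := by
    ext s
    simp only [ContinuousMap.restrict_apply, ContinuousMap.coe_sum, ContinuousMap.coe_smul,
      Finset.sum_apply, Pi.smul_apply, smul_eq_mul, ContinuousMap.coe_mk, coord]
    conv_lhs => rw [← Finset.univ_sum_single (s : Fin n → ℝ)]
    refine (map_sum f _ _).trans (Finset.sum_congr rfl fun i _ => ?_)
    rw [mul_comm, ← smul_eq_mul, ← map_smul, ← Pi.single_smul, smul_eq_mul, mul_one]
  rw [hf]
  exact Submodule.sum_mem _ fun i _ => Submodule.real_smul_mem_of_isClosed _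
    (Submodule.isClosed_topologicalClosure _) _ (Submodule.le_topologicalClosure _ (hcoord i))

lemma exists_mem_topologicalClosure_sphereSpan_eq_one_eq_zero {x y : 𝕊 n}
    (hxy : ∀ c : ℝ, 0 ≤ c → (x : Fin n → ℝ) ≠ c • (y : Fin n → ℝ)) :
    ∃ F ∈ (sphereSpan n).topologicalClosure, F x = 1 ∧ F y = 0 := by
  obtain ⟨f, hfx, hfy⟩ := exists_dual_pos_nonpos_of_notMem_ray hxy
  refine ⟨(f x)⁻¹ • (ContinuousMap.restrict (𝕊 n) f ⊔ 0), ?_, ?_, ?_⟩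
  · refine Submodule.real_smul_mem_of_isClosed _ (Submodule.isClosed_topologicalClosure _) _ ?_
    exact ContinuousMap.sup_mem_topologicalClosure _ sphereSpan_inf_mem
      (restrict_mem_topologicalClosure_sphereSpan f) (Submodule.zero_mem _)
  · simp [hfx.le, hfx.ne']
  · simp [hfy]

lemma dense_sphereSpan : Dense (sphereSpan n : Set C(𝕊 n, ℝ)) := by
  have hnorm (x : 𝕊 n) : ‖(x : Fin n → ℝ)‖ = 1 := mem_sphere_zero_iff_norm.1 x.2
  refine ContinuousMap.dense_of_inf_mem _ sphereSpan_inf_mem (fun x y hne => ?_) fun x => ?_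
  · exact exists_mem_topologicalClosure_sphereSpan_eq_one_eq_zero fun c hc =>
      ne_smul_of_norm_eq_one (hnorm x) (hnorm y) (Subtype.coe_injective.ne hne) hc
  · have hx : (x : Fin n → ℝ) ≠ -x := self_ne_neg.2 (norm_ne_zero_iff.1 (by simp [hnorm x]))
    obtain ⟨F, hF, hFx, -⟩ := exists_mem_topologicalClosure_sphereSpan_eq_one_eq_zero
      (x := x) (y := ⟨-x, by simp [hnorm x]⟩) fun c hc =>
        ne_smul_of_norm_eq_one (hnorm x) (by simp [hnorm x]) hx hc
    exact ⟨F, hF, hFx⟩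

lemma exists_mem_plSpan_abs_sub_le_of_norm_eq_one {g : (Fin n → ℝ) → ℝ} (hg : Continuous g)
    {δ : ℝ} (hδ : 0 < δ) : ∃ h ∈ plSpan n, ∀ s, ‖s‖ = 1 → |g s - h s| ≤ δ := by
  obtain ⟨F, hF, hdist⟩ :=
    dense_sphereSpan.exists_dist_lt (ContinuousMap.restrict (𝕊 n) ⟨g, hg⟩) hδ
  obtain ⟨h, hh, hhF⟩ := mem_sphereSpan.1 hF
  refine ⟨h, hh, fun s hs => ?_⟩
  have hs' : s ∈ 𝕊 n := by simpa using hs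
  have := (ContinuousMap.dist_apply_le_dist ⟨s, hs'⟩).trans hdist.le
  rwa [← hhF, ContinuousMap.restrict_apply, Real.dist_eq] at this

lemma exists_mem_plSpan_abs_sub_le {g : (Fin n → ℝ) → ℝ} (hg : Continuous g)
    (hgcon : IsConical g) {K : Set (Fin n → ℝ)} (hK : IsCompact K) {ε : ℝ} (hε : 0 < ε) :
    ∃ h ∈ plSpan n, ∀ x ∈ K, |g x - h x| ≤ ε := by
  obtain ⟨R, hR, hKR⟩ := hK.isBounded.exists_pos_norm_le
  obtain ⟨h, hh, hgh⟩ := exists_mem_plSpan_abs_sub_le_of_norm_eq_one hg (div_pos hε hR)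
  refine ⟨h, hh, fun x hx => ?_⟩
  calc |g x - h x| ≤ ε / R * ‖x‖ :=
        (hgcon.sub (isConical_of_mem_plSpan hh)).abs_le_mul_norm hgh x
    _ ≤ ε / R * R := by gcongr; exact hKR x hx
    _ = ε := div_mul_cancel₀ ε hR.ne'

end

/-- the set of such piecewise-linear conical functions is closed under
addition and pointwise minimum, separates points of the unit sphere, and its `ℚ`-span is
dense among continuous conical functions, uniformly on compact sets. -/
theorem stmt_10 (n : ℕ) :
    (∀ f g, IsPL n f → IsPL n g → IsPL n (f + g)) ∧
    (∀ f g, IsPL n f → IsPL n g → IsPL n (fun x => min (f x) (g x))) ∧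
    (∀ x y : Fin n → ℝ, ‖x‖ = 1 → ‖y‖ = 1 → x ≠ y → ∃ f, IsPL n f ∧ f x ≠ f y) ∧
    (∀ g : (Fin n → ℝ) → ℝ, Continuous g →
      (∀ c : ℝ, 0 < c → ∀ x, g (c • x) = c * g x) →
      ∀ K : Set (Fin n → ℝ), IsCompact K → ∀ ε : ℝ, 0 < ε →
        ∃ h ∈ Submodule.span ℚ {f | IsPL n f}, ∀ x ∈ K, |g x - h x| ≤ ε) := by
  refine ⟨fun f g hf hg => hf.add hg, fun f g hf hg => hf.min hg, fun x y _ _ hxy => ?_,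
    fun g hg hgcon K hK ε hε => exists_mem_plSpan_abs_sub_le hg hgcon hK hε⟩
  obtain ⟨i, hi⟩ := Function.ne_iff.1 hxy
  exact ⟨fun v => v i, isPL_apply i, hi⟩
end

section
/- Let X be a compact Hausdorff space, and let A, B ⊂ X be disjoint closed subsets. Suppose for every x ∈ X \ (A ∪ B) there is a continuous path L_x : [0,∞] → X with L_x(0) ∈ A, L_x(∞) ∈ B, and L_x(t) ∈ X \ (A ∪ B) for t ∈ (0,∞), with L_x(1) = x, such that all points L_x(t) for t ∈ (0,∞) are equivalent to x under a given equivalence relation ∼ on X \ (A ∪ B). Then there exist disjoint open sets W₁ ⊇ A, W₂ ⊇ B, and the compact set W₃ = X \ (W₁ ∪ W₂) meets every ∼-equivalence class of X \ (A ∪ B); consequently the quotient (X \ (A ∪ B))/∼ is compact. -/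
open scoped ENNReal

/-!
Compact Hausdorff spaces are normal, so `A` and `B` have disjoint open neighbourhoods `W₁` and
`W₂`. A path `L_x` starts in `W₁` and ends in `W₂`, so by connectedness of `[0,∞]` it must leave
`W₁ ∪ W₂`, necessarily at an interior time, hence at a point equivalent to `x`. Thus the quotient
map sends the closed, hence compact, set `X \ (W₁ ∪ W₂)` onto the quotient.
-/

open Set

theorem Continuous.exists_apply_notMem_union {α X : Type*} [TopologicalSpace α]
    [PreconnectedSpace α] [TopologicalSpace X] {f : α → X} (hf : Continuous f) {U V : Set X}
    (hU : IsOpen U) (hV : IsOpen V) (hUV : Disjoint U V) {a b : α} (ha : f a ∈ U)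
    (hb : f b ∈ V) : ∃ t, f t ∉ U ∪ V := by
  by_contra! hcover
  obtain ⟨_, ⟨t, rfl⟩, htU, htV⟩ := isPreconnected_range hf U V hU hV
    (range_subset_iff.2 hcover) ⟨_, mem_range_self a, ha⟩ ⟨_, mem_range_self b, hb⟩
  exact hUV.ne_of_mem htU htV rfl

theorem exists_rel_notMem_union_of_path {α X : Type*} [TopologicalSpace α] [PreconnectedSpace α]
    [TopologicalSpace X] {A B W₁ W₂ : Set X} (s : Setoid ↥((A ∪ B)ᶜ)) (hW₁ : IsOpen W₁)
    (hW₂ : IsOpen W₂) (hW : Disjoint W₁ W₂) (hAW : A ⊆ W₁) (hBW : B ⊆ W₂)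
    (x : ↥((A ∪ B)ᶜ)) {L : α → X} (hL : Continuous L) {a b : α} (ha : L a ∈ A) (hb : L b ∈ B)
    (hrel : ∀ t, t ≠ a → t ≠ b → ∃ h : L t ∈ (A ∪ B)ᶜ, s.r ⟨L t, h⟩ x) :
    ∃ y : ↥((A ∪ B)ᶜ), (y : X) ∉ W₁ ∪ W₂ ∧ s.r y x := by
  obtain ⟨t, ht⟩ := hL.exists_apply_notMem_union hW₁ hW₂ hW (hAW ha) (hBW hb)
  have hta : t ≠ a := by rintro rfl; exact ht (Or.inl (hAW ha))
  have htb : t ≠ b := by rintro rfl; exact ht (Or.inr (hBW hb))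
  obtain ⟨htAB, hr⟩ := hrel t hta htb
  exact ⟨⟨L t, htAB⟩, ht, hr⟩

theorem IsClosed.isCompact_preimage_subtypeVal {X : Type*} [TopologicalSpace X] [CompactSpace X]
    {C K : Set X} (hK : IsClosed K) (hKC : K ⊆ C) : IsCompact ((↑) ⁻¹' K : Set C) := by
  rw [Subtype.isCompact_iff, Subtype.image_preimage_coe, inter_eq_right.2 hKC]
  exact hK.isCompact

theorem Quotient.compactSpace_of_isCompact {Y : Type*} [TopologicalSpace Y] {s : Setoid Y}
    {K : Set Y} (hK : IsCompact K) (hKs : ∀ x, ∃ y ∈ K, s.r y x) : CompactSpace (Quotient s) := by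
  have himage : Quotient.mk s '' K = univ := eq_univ_of_forall fun q ↦ q.inductionOn fun x ↦
    let ⟨y, hy, hyx⟩ := hKs x
    ⟨y, hy, Quotient.sound hyx⟩
  exact ⟨himage ▸ hK.image continuous_quotient_mk'⟩

/-- in a compact Hausdorff space `X` with disjoint closed sets `A, B`, if
every point of `X \ (A ∪ B)` lies on a continuous path `L : [0,∞] → X` from `A` to `B`
staying in `X \ (A ∪ B)` for `t ∈ (0,∞)` and consisting of points equivalent (for a
given setoid `s` on `X \ (A ∪ B)`) to the given point, then there are disjoint open
neighbourhoods `W₁ ⊇ A`, `W₂ ⊇ B` such that the compact set `X \ (W₁ ∪ W₂)` meets every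
equivalence class, and the quotient `(X \ (A ∪ B)) / s` is compact. -/
theorem stmt_13 {X : Type*} [TopologicalSpace X] [CompactSpace X] [T2Space X]
    (A B : Set X) (hA : IsClosed A) (hB : IsClosed B) (hAB : Disjoint A B)
    (s : Setoid ↥((A ∪ B)ᶜ))
    (hpath : ∀ x : ↥((A ∪ B)ᶜ), ∃ L : ℝ≥0∞ → X, Continuous L ∧
      L 0 ∈ A ∧ L ⊤ ∈ B ∧ L 1 = (x : X) ∧
      ∀ t : ℝ≥0∞, t ≠ 0 → t ≠ ⊤ →
        ∃ h : L t ∈ (A ∪ B)ᶜ, s.r ⟨L t, h⟩ x) :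
    ∃ W₁ W₂ : Set X, IsOpen W₁ ∧ IsOpen W₂ ∧ Disjoint W₁ W₂ ∧ A ⊆ W₁ ∧ B ⊆ W₂ ∧
      (∀ x : ↥((A ∪ B)ᶜ), ∃ y : ↥((A ∪ B)ᶜ), (y : X) ∉ W₁ ∪ W₂ ∧ s.r y x) ∧
      CompactSpace (Quotient s) := by
  obtain ⟨W₁, W₂, hW₁, hW₂, hAW, hBW, hW⟩ := normal_separation hA hB hAB
  have hmeet (x : ↥((A ∪ B)ᶜ)) : ∃ y : ↥((A ∪ B)ᶜ), (y : X) ∉ W₁ ∪ W₂ ∧ s.r y x := by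
    obtain ⟨L, hL, h0, htop, -, hrel⟩ := hpath x
    exact exists_rel_notMem_union_of_path s hW₁ hW₂ hW hAW hBW x hL h0 htop hrel
  have hW₃ : IsCompact ((↑) ⁻¹' (W₁ ∪ W₂)ᶜ : Set ↥((A ∪ B)ᶜ)) :=
    (hW₁.union hW₂).isClosed_compl.isCompact_preimage_subtypeVal
      (compl_subset_compl.2 (union_subset_union hAW hBW))
  exact ⟨W₁, W₂, hW₁, hW₂, hW, hAW, hBW, hmeet, Quotient.compactSpace_of_isCompact hW₃ hmeet⟩
end
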